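/- Let ψ_R : R → R be the ℚ-linear map with ψ_R(x_μ) = x_μ, ψ_R(h_α) = h_α, and ψ_R(f v) = f̄ ψ_R(v) for f ∈ ℚ(q) and v ∈ R, where f̄ denotes f with q replaced by q⁻¹. Then ψ_R is an involution (ψ_R² = id), it satisfies ψ_R E_α = E_α ψ_R, ψ_R F_α = F_α ψ_R, ψ_R K_α = K_α⁻¹ ψ_R for every α ∈ Π, and ⟨ψ_R u, ψ_R v⟩ = ⟨v, u⟩ for all u, v ∈ R. -/

import Mathlib

/-!
The adjoint representation of a simply-laced quantum group, realized concretely on the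
`ℚ(q)`-vector space with basis `{x_μ : μ ∈ Φ} ∪ {h_α : α ∈ Π}`.
-/

noncomputable section

open Polynomial

/-- The field `ℚ(q)` of rational functions over `ℚ`. -/
abbrev Qq : Type := RatFunc ℚ

/-- The indeterminate `q ∈ ℚ(q)`. -/
def qv : Qq := RatFunc.X

/-- A datum abstracting a simply-laced root system `Φ` with base `Π`, normalized so that
`(α, α) = 2` for roots: a symmetric bilinear form `B` together with the standard
combinatorial facts about pairings of roots and simple roots that hold in any finite
reduced irreducible crystallographic simply-laced root system. -/
structure SimplyLacedDatum (E : Type) [AddCommGroup E] [Module ℚ E] where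
  /-- the inner product `(·,·)` -/
  B : E →ₗ[ℚ] E →ₗ[ℚ] ℚ
  symm : ∀ x y : E, B x y = B y x
  /-- the set of roots `Φ` -/
  Phi : Set E
  /-- the base `Π` of simple roots -/
  Base : Set E
  base_sub : Base ⊆ Phi
  phi_finite : Phi.Finite
  zero_not_mem : (0 : E) ∉ Phi
  crystallographic : ∀ μ ∈ Phi, ∀ ν ∈ Phi, ∃ n : ℤ, B μ ν = n
  norm_two : ∀ μ ∈ Phi, B μ μ = 2
  neg_mem : ∀ μ ∈ Phi, -μ ∈ Phi
  base_pair : ∀ α ∈ Base, ∀ β ∈ Base, α ≠ β → B α β = 0 ∨ B α β = -1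
  pair_range : ∀ μ ∈ Phi, ∀ α ∈ Base,
      B μ α = -2 ∨ B μ α = -1 ∨ B μ α = 0 ∨ B μ α = 1 ∨ B μ α = 2
  pair_two_iff : ∀ μ ∈ Phi, ∀ α ∈ Base, (B μ α = 2 ↔ μ = α)
  pair_neg_two_iff : ∀ μ ∈ Phi, ∀ α ∈ Base, (B μ α = -2 ↔ μ = -α)
  add_mem : ∀ μ ∈ Phi, ∀ α ∈ Base, B μ α = -1 → μ + α ∈ Phi
  sub_mem : ∀ μ ∈ Phi, ∀ α ∈ Base, B μ α = 1 → μ - α ∈ Phi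

namespace SimplyLacedDatum

variable {E : Type} [AddCommGroup E] [Module ℚ E] (D : SimplyLacedDatum E)

/-- The index set for the canonical basis of the adjoint representation:
one index for each root `μ ∈ Φ` (the vector `x_μ`) and one for each simple root
`α ∈ Π` (the vector `h_α`). -/
def Idx : Type := {μ : E // μ ∈ D.Phi} ⊕ {α : E // α ∈ D.Base}

/-- The adjoint representation `R`, as the free `ℚ(q)`-module on `Idx`. -/
def R : Type := D.Idx →₀ Qq

instance : AddCommGroup D.R := inferInstanceAs (AddCommGroup (D.Idx →₀ Qq))
instance : Module Qq D.R := inferInstanceAs (Module Qq (D.Idx →₀ Qq))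

/-- The canonical basis vector `x_μ`, for a root `μ ∈ Φ`. -/
def xv (μ : E) (h : μ ∈ D.Phi) : D.R := Finsupp.single (Sum.inl ⟨μ, h⟩) 1

/-- The canonical basis vector `h_α`, for a simple root `α ∈ Π`. -/
def hv (α : E) (h : α ∈ D.Base) : D.R := Finsupp.single (Sum.inr ⟨α, h⟩) 1

/-- The `ℚ(q)`-linear operator on `R` sending the basis vector indexed by `i` to `v i`. -/
def opOf (v : D.Idx → D.R) : D.R →ₗ[Qq] D.R :=
  Finsupp.lsum Qq fun i => LinearMap.toSpanSingleton Qq D.R (v i)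

open Classical in
/-- The images of the basis vectors under `E_α`. -/
def Evec (α : E) (hα : α ∈ D.Base) : D.Idx → D.R := fun i =>
  match i with
  | Sum.inl μ =>
      if h : D.B μ.1 α = -1 then D.xv (μ.1 + α) (D.add_mem μ.1 μ.2 α hα h)
      else if D.B μ.1 α = -2 then D.hv α hα
      else 0
  | Sum.inr β =>
      if β.1 = α then (qv + qv⁻¹) • D.xv α (D.base_sub hα)
      else if D.B β.1 α = -1 then D.xv α (D.base_sub hα)
      else 0

open Classical in
/-- The images of the basis vectors under `F_α`. -/
def Fvec (α : E) (hα : α ∈ D.Base) : D.Idx → D.R := fun i =>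
  match i with
  | Sum.inl μ =>
      if h : D.B μ.1 α = 1 then D.xv (μ.1 - α) (D.sub_mem μ.1 μ.2 α hα h)
      else if D.B μ.1 α = 2 then D.hv α hα
      else 0
  | Sum.inr β =>
      if β.1 = α then (qv + qv⁻¹) • D.xv (-α) (D.neg_mem α (D.base_sub hα))
      else if D.B β.1 α = -1 then D.xv (-α) (D.neg_mem α (D.base_sub hα))
      else 0

/-- The images of the basis vectors under `K_α`: `K_α x_μ = q^{(α,μ)} x_μ`,
`K_α h_β = h_β`. -/
def Kvec (α : E) (hα : α ∈ D.Base) : D.Idx → D.R := fun i =>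
  match i with
  | Sum.inl μ => qv ^ (D.B α μ.1).num • D.xv μ.1 μ.2
  | Sum.inr β => D.hv β.1 β.2

/-- The images of the basis vectors under `K_α⁻¹`: `K_α⁻¹ x_μ = q^{−(α,μ)} x_μ`,
`K_α⁻¹ h_β = h_β`. -/
def Kinvvec (α : E) (hα : α ∈ D.Base) : D.Idx → D.R := fun i =>
  match i with
  | Sum.inl μ => qv ^ (-(D.B α μ.1).num) • D.xv μ.1 μ.2
  | Sum.inr β => D.hv β.1 β.2

/-- The operator `E_α` on the adjoint representation. -/
def opE (α : E) (hα : α ∈ D.Base) : D.R →ₗ[Qq] D.R := D.opOf (D.Evec α hα)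

/-- The operator `F_α` on the adjoint representation. -/
def opF (α : E) (hα : α ∈ D.Base) : D.R →ₗ[Qq] D.R := D.opOf (D.Fvec α hα)

/-- The operator `K_α` on the adjoint representation. -/
def opK (α : E) (hα : α ∈ D.Base) : D.R →ₗ[Qq] D.R := D.opOf (D.Kvec α hα)

/-- The operator `K_α⁻¹` on the adjoint representation. -/
def opKinv (α : E) (hα : α ∈ D.Base) : D.R →ₗ[Qq] D.R := D.opOf (D.Kinvvec α hα)

end SimplyLacedDatum

end

noncomputable section

namespace SimplyLacedDatum

/-- `X` is transcendental over `ℚ` in `ℚ(q)`. -/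
theorem ratfuncX_transcendental : Transcendental ℚ (RatFunc.X : Qq) := by
  have h1 : Transcendental ℚ (Polynomial.X : Polynomial ℚ) := Polynomial.transcendental_X ℚ
  have h2 := (transcendental_algebraMap_iff (R := ℚ) (S := Polynomial ℚ) (A := Qq)
      (IsFractionRing.injective (Polynomial ℚ) Qq)).mpr h1
  simpa using h2

/-- `q⁻¹` is transcendental over `ℚ` in `ℚ(q)`. -/
theorem qv_inv_transcendental : Transcendental ℚ (qv⁻¹ : Qq) := fun h =>
  ratfuncX_transcendental (IsAlgebraic.inv_iff.mp h)

/-- The bar involution of `ℚ(q)`: the `ℚ`-algebra map determined by `q ↦ q⁻¹`. -/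
def barHom : Qq →+* Qq :=
  IsFractionRing.lift (A := Polynomial ℚ)
    (g := (Polynomial.aeval (qv⁻¹ : Qq)).toRingHom)
    (transcendental_iff_injective.mp qv_inv_transcendental)

variable {E : Type} [AddCommGroup E] [Module ℚ E] (D : SimplyLacedDatum E)

open Classical in
/-- The Gram matrix of the semilinear form on the canonical basis of `R`:
`⟨x_μ, x_ν⟩ = δ_{μν}`, `⟨x_μ, h_α⟩ = ⟨h_α, x_μ⟩ = 0`, `⟨h_α, h_α⟩ = 1 + q²`,
`⟨h_α, h_β⟩ = q` if `(α,β) = −1`, and `⟨h_α, h_β⟩ = 0` if `(α,β) = 0`. -/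
def gram : D.Idx → D.Idx → Qq := fun i j =>
  match i, j with
  | Sum.inl μ, Sum.inl ν => if μ = ν then 1 else 0
  | Sum.inl _, Sum.inr _ => 0
  | Sum.inr _, Sum.inl _ => 0
  | Sum.inr α, Sum.inr β =>
      if α = β then 1 + qv ^ 2 else if D.B α.1 β.1 = -1 then qv else 0

/-- The semilinear form `⟨·,·⟩` on `R`: `ℚ(q)`-antilinear in the first variable
(via the bar involution `q ↦ q⁻¹`) and `ℚ(q)`-linear in the second, given on the
canonical basis by the Gram matrix `gram`. -/
def form (u v : D.R) : Qq :=
  u.sum fun i c => v.sum fun j d => barHom c * d * D.gram i j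

end SimplyLacedDatum

end

noncomputable section

/-- The `ℚ`-linear bar involution `ψ_R` of `R`: it fixes the canonical basis vectors
`x_μ` and `h_α` and conjugates coefficients, `ψ_R(f v) = f̄ ψ_R(v)` for `f ∈ ℚ(q)`. -/
def SimplyLacedDatum.psiOp {E : Type} [AddCommGroup E] [Module ℚ E]
    (D : SimplyLacedDatum E) (u : D.R) : D.R :=
  Finsupp.mapRange (⇑SimplyLacedDatum.barHom) (map_zero _) u

/-! `ψ_R` applies the bar involution `q ↦ q⁻¹` coefficientwise, so it is a `barHom`-semilinear
involution fixing the canonical basis; it therefore intertwines two operators as soon as it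
maps the image of each basis vector under the first to its image under the second. The images under
`E_α` and `F_α` have coefficients in `{0, 1, q + q⁻¹}`, all bar-invariant, while those under
`K_α` are `q^n x_μ` and `h_β`, sent to `q^{-n} x_μ` and `h_β`, the images under `K_α⁻¹`.
Finally, `⟨ψ_R u, ψ_R v⟩ = ⟨v, u⟩` amounts to the symmetry of the Gram matrix. -/

theorem Finsupp.sum_mapRange_sum_mapRange_of_involutive {ι K : Type*} [CommSemiring K]
    {σ : K →+* K} (hσ : Function.Involutive σ) {g : ι → ι → K} (hg : ∀ i j, g i j = g j i)
    (u v : ι →₀ K) :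
    ((u.mapRange σ (map_zero σ)).sum fun i c => (v.mapRange σ (map_zero σ)).sum fun j d =>
      σ c * d * g i j) = v.sum fun i c => u.sum fun j d => σ c * d * g i j := by
  rw [Finsupp.sum_mapRange_index (by simp), Finsupp.sum_comm,
    Finsupp.sum_mapRange_index (by simp)]
  simp only [hσ _, hg, mul_comm]

namespace SimplyLacedDatum

open Polynomial

theorem barHom_qv : barHom qv = qv⁻¹ := by
  have : barHom (algebraMap ℚ[X] Qq X) = aeval qv⁻¹ X := IsFractionRing.lift_algebraMap _ _
  simpa [qv] using this

theorem barHom_qv_inv : barHom qv⁻¹ = qv := by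
  rw [map_inv₀, barHom_qv, inv_inv]

theorem barHom_qv_add_qv_inv : barHom (qv + qv⁻¹) = qv + qv⁻¹ := by
  rw [map_add, barHom_qv, barHom_qv_inv, add_comm]

theorem barHom_qv_zpow (n : ℤ) : barHom (qv ^ n) = qv ^ (-n) := by
  rw [map_zpow₀, barHom_qv, inv_zpow, zpow_neg]

theorem barHom_involutive : Function.Involutive barHom := by
  suffices barHom.comp barHom = RingHom.id Qq from RingHom.congr_fun this
  refine IsFractionRing.ringHom_ext (A := ℚ[X]) fun p => ?_
  refine DFunLike.congr_fun (Polynomial.ringHom_ext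
    (f := (barHom.comp barHom).comp (algebraMap ℚ[X] Qq)) (g := algebraMap ℚ[X] Qq)
    (fun a => by simp) ?_) p
  change barHom (barHom qv) = qv
  rw [barHom_qv, barHom_qv_inv]

variable {E : Type} [AddCommGroup E] [Module ℚ E] (D : SimplyLacedDatum E)

def psiOpSemilinear : D.R →ₛₗ[barHom] D.R where
  toFun := D.psiOp
  map_add' := Finsupp.mapRange_add (map_add barHom)
  map_smul' c := Finsupp.mapRange_smul' c (barHom c) (hsmul := map_mul barHom c)

theorem psiOp_zero : D.psiOp 0 = 0 :=
  map_zero D.psiOpSemilinear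

theorem psiOp_smul (c : Qq) (u : D.R) : D.psiOp (c • u) = barHom c • D.psiOp u :=
  map_smulₛₗ D.psiOpSemilinear c u

theorem psiOp_psiOp (u : D.R) : D.psiOp (D.psiOp u) = u :=
  Finsupp.ext fun _ => barHom_involutive _

theorem psiOp_single (i : D.Idx) (c : Qq) :
    D.psiOp (Finsupp.single i c) = Finsupp.single i (barHom c) :=
  Finsupp.mapRange_single

theorem psiOp_xv (μ : E) (h : μ ∈ D.Phi) : D.psiOp (D.xv μ h) = D.xv μ h :=
  (D.psiOp_single _ 1).trans (congrArg _ (map_one _))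

theorem psiOp_hv (α : E) (h : α ∈ D.Base) : D.psiOp (D.hv α h) = D.hv α h :=
  (D.psiOp_single _ 1).trans (congrArg _ (map_one _))

theorem opOf_single (v : D.Idx → D.R) (i : D.Idx) (c : Qq) :
    D.opOf v (Finsupp.single i c) = c • v i :=
  Finsupp.lsum_single _ _ _ _

theorem psiOp_opOf {v w : D.Idx → D.R} (hvw : ∀ i, D.psiOp (v i) = w i) (u : D.R) :
    D.psiOp (D.opOf v u) = D.opOf w (D.psiOp u) := by
  suffices D.psiOpSemilinear.comp (D.opOf v) = (D.opOf w).comp D.psiOpSemilinear from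
    LinearMap.congr_fun this u
  refine Finsupp.lhom_ext fun i c => ?_
  change D.psiOp (D.opOf v (Finsupp.single i c)) = D.opOf w (D.psiOp (Finsupp.single i c))
  rw [opOf_single, psiOp_smul, hvw, psiOp_single, opOf_single]

theorem psiOp_Evec (α : E) (hα : α ∈ D.Base) (i : D.Idx) :
    D.psiOp (D.Evec α hα i) = D.Evec α hα i := by
  rcases i with μ | β <;> simp only [Evec] <;> split_ifs <;>
    simp only [psiOp_zero, psiOp_xv, psiOp_hv, psiOp_smul, barHom_qv_add_qv_inv]

theorem psiOp_Fvec (α : E) (hα : α ∈ D.Base) (i : D.Idx) :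
    D.psiOp (D.Fvec α hα i) = D.Fvec α hα i := by
  rcases i with μ | β <;> simp only [Fvec] <;> split_ifs <;>
    simp only [psiOp_zero, psiOp_xv, psiOp_hv, psiOp_smul, barHom_qv_add_qv_inv]

theorem psiOp_Kvec (α : E) (hα : α ∈ D.Base) (i : D.Idx) :
    D.psiOp (D.Kvec α hα i) = D.Kinvvec α hα i := by
  rcases i with μ | β
  · rw [Kvec, Kinvvec, psiOp_smul, psiOp_xv, barHom_qv_zpow]
  · exact D.psiOp_hv _ _

theorem gram_symm (i j : D.Idx) : D.gram i j = D.gram j i := by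
  classical
  rcases i with μ | a <;> rcases j with ν | b <;> simp only [gram]
  · exact if_congr eq_comm rfl rfl
  · exact if_congr eq_comm rfl (if_congr (by rw [D.symm]) rfl rfl)

theorem form_psiOp_psiOp (u v : D.R) : D.form (D.psiOp u) (D.psiOp v) = D.form v u :=
  Finsupp.sum_mapRange_sum_mapRange_of_involutive barHom_involutive D.gram_symm u v

end SimplyLacedDatum

/-- `ψ_R` is an involution of `R`, it commutes with `E_α` and `F_α`,
satisfies `ψ_R K_α = K_α⁻¹ ψ_R`, and `⟨ψ_R u, ψ_R v⟩ = ⟨v, u⟩` for all `u, v ∈ R`. -/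
theorem SimplyLacedDatum.psiOp_properties {E : Type} [AddCommGroup E] [Module ℚ E]
    (D : SimplyLacedDatum E) :
    (∀ u : D.R, D.psiOp (D.psiOp u) = u) ∧
    (∀ α : E, ∀ hα : α ∈ D.Base, ∀ u : D.R,
      D.psiOp (D.opE α hα u) = D.opE α hα (D.psiOp u) ∧
      D.psiOp (D.opF α hα u) = D.opF α hα (D.psiOp u) ∧
      D.psiOp (D.opK α hα u) = D.opKinv α hα (D.psiOp u)) ∧
    (∀ u v : D.R, D.form (D.psiOp u) (D.psiOp v) = D.form v u) :=
  ⟨D.psiOp_psiOp,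
    fun α hα u => ⟨D.psiOp_opOf (D.psiOp_Evec α hα) u, D.psiOp_opOf (D.psiOp_Fvec α hα) u,
      D.psiOp_opOf (D.psiOp_Kvec α hα) u⟩,
    D.form_psiOp_psiOp⟩

end
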